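/- arXiv:1412.8411 — 2 statements merged into one kernel-verified Lean document; each statement's English description precedes it below -/
import Mathlib

section
/- Let 0 ≤ i ≤ n and let diag_! : SSet → ssSet be the left adjoint to restriction along the diagonal Δ → Δ × Δ. Then the bisimplicial set diag_!(Λⁿᵢ) is naturally isomorphic to the sub-bisimplicial set of Δⁿ ⊠ Δⁿ whose (j,k)-bisimplices are the pairs (α : [j] → [n], β : [k] → [n]) such that there exists l ∈ [n] with l ≠ i and l not in the image of α nor in the image of β. -/
/-!
The map `α ↦ (α, α)` from `Λ[n, i]` to the diagonal of `hornExtProd n i` is a universal arrow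
for restriction along the diagonal, hence exhibits `hornExtProd n i` as `diag_! Λ[n, i]`.
A pair `(a, b)` avoiding `l ≠ i` factors as `(a', b') ≫ (δ l, δ l)`, so it is the image of the
diagonal pair of the horn face `δ l`. Hence a map out of `hornExtProd n i` is determined by its
restriction `ψ` to the horn, and any `ψ` extends by `(a, b) ↦ X.map (a', b') (ψ (δ l))`.
The choice of `l` does not matter: for two admissible `l ≠ l'` the pair factors through the
codimension-two face missing both, on which the faces `δ l` and `δ l'` restrict to the same
simplex of the horn. For `n = 0` both sides are empty.
-/

open CategoryTheory Simplicial

/-- The sub-bisimplicial set of `Δⁿ ⊠ Δⁿ` whose `(j,k)`-bisimplices are the pairs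
`(α : [j] ⟶ [n], β : [k] ⟶ [n])` such that some `l ≠ i` lies neither in the image of `α`
nor in the image of `β`. -/
def hornExtProd (n : ℕ) (i : Fin (n + 1)) : (SimplexCategory × SimplexCategory)ᵒᵖ ⥤ Type where
  obj p := { q : (p.unop.1 ⟶ ⦋n⦌) × (p.unop.2 ⟶ ⦋n⦌) //
      ∃ l : Fin (n + 1), l ≠ i ∧ (∀ a, q.1.toOrderHom a ≠ l) ∧ (∀ b, q.2.toOrderHom b ≠ l) }
  map {p p'} f := TypeCat.ofHom fun q => ⟨(f.unop.1 ≫ q.1.1, f.unop.2 ≫ q.1.2), by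
    obtain ⟨l, hl, h₁, h₂⟩ := q.2
    exact ⟨l, hl, fun a => h₁ _, fun b => h₂ _⟩⟩
  map_id := by
    intro p
    ext q
    all_goals simp
  map_comp := by
    intro p p' p'' f g
    ext q
    all_goals simp

open SimplexCategory SSet Opposite Limits

noncomputable def CategoryTheory.StructuredArrow.IsUniversal.ofExistsOfHomExt {C D : Type*}
    [Category C] [Category D] {S : D} {T : C ⥤ D} {f : StructuredArrow S T}
    (exists_fac : ∀ g : StructuredArrow S T, ∃ η : f.right ⟶ g.right, f.hom ≫ T.map η = g.hom)
    (hom_ext : ∀ {c : C} (η η' : f.right ⟶ c), f.hom ≫ T.map η = f.hom ≫ T.map η' → η = η') :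
    f.IsUniversal :=
  IsInitial.ofUniqueHom
    (fun g => StructuredArrow.homMk (exists_fac g).choose (exists_fac g).choose_spec)
    (fun g m => StructuredArrow.ext _ _ <|
      hom_ext _ _ ((StructuredArrow.w m).trans (exists_fac g).choose_spec.symm))

namespace SimplexCategory

lemma factor_δ_comp {x y : SimplexCategory} {n : ℕ} (g : y ⟶ x) (f : x ⟶ ⦋n + 1⦌)
    (j : Fin (n + 2)) : factor_δ (g ≫ f) j = g ≫ factor_δ f j :=
  Category.assoc _ _ _

lemma factor_δ_comp_δ {x : SimplexCategory} {n : ℕ} (f : x ⟶ ⦋n⦌) (j : Fin (n + 2)) :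
    factor_δ (f ≫ δ j) j = f :=
  (cancel_mono (δ j)).1 (factor_δ_spec _ j fun _ => Fin.succAbove_ne j _)

lemma exists_eq_comp_δ_comp_δ {x : SimplexCategory} {n : ℕ} (a : x ⟶ ⦋n + 2⦌)
    (l : Fin (n + 3)) (j : Fin (n + 2)) (hl : ∀ t, a.toOrderHom t ≠ l)
    (hj : ∀ t, a.toOrderHom t ≠ l.succAbove j) : ∃ w, w ≫ δ j ≫ δ l = a := by
  have ha : factor_δ a l ≫ δ l = a := factor_δ_spec a l hl
  refine ⟨factor_δ (factor_δ a l) j, ?_⟩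
  rw [← Category.assoc, factor_δ_spec _ j fun t ht => hj t ?_, ha]
  rw [← ha]
  exact congrArg (δ l).toOrderHom ht

lemma δ_comp_δ_predAbove {n : ℕ} (l : Fin (n + 3)) (j : Fin (n + 2)) :
    δ j ≫ δ l = δ (j.predAbove l) ≫ δ (l.succAbove j) := by
  ext k : 3
  exact (Fin.succAbove_succAbove_succAbove_predAbove l j k).symm

end SimplexCategory

lemma SSet.horn.map_face_eq_map_face {n : ℕ} {i l l' : Fin (n + 2)} (hl : l ≠ i) (hl' : l' ≠ i)
    {x : SimplexCategory} (d d' : x ⟶ ⦋n⦌) (h : d ≫ δ l = d' ≫ δ l') :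
    (Λ[n + 1, i] : SSet.{u}).map d.op (horn.face i l hl) =
      (Λ[n + 1, i] : SSet.{u}).map d'.op (horn.face i l' hl') :=
  Subtype.ext (stdSimplex.objEquiv.injective h)

abbrev diagRestriction : ((SimplexCategory × SimplexCategory)ᵒᵖ ⥤ Type) ⥤ SSet.{0} :=
  (Functor.whiskeringLeft _ _ _).obj (Functor.diag SimplexCategory).op

lemma diagRestriction_naturality_apply {X : (SimplexCategory × SimplexCategory)ᵒᵖ ⥤ Type}
    {K : SSet.{0}} (ψ : K ⟶ diagRestriction.obj X) {x y m m' : SimplexCategory}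
    (u : x ⟶ m) (v : y ⟶ m) (d : m ⟶ m') (σ : K.obj (op m')) :
    X.map (Quiver.Hom.op ((u ≫ d, v ≫ d) : (x, y) ⟶ (m', m'))) (ψ.app _ σ) =
      X.map (Quiver.Hom.op ((u, v) : (x, y) ⟶ (m, m))) (ψ.app _ (K.map d.op σ)) := by
  rw [NatTrans.naturality_apply]
  exact X.map_comp_apply (Quiver.Hom.op ((d, d) : (m, m) ⟶ (m', m')))
    (Quiver.Hom.op ((u, v) : (x, y) ⟶ (m, m))) _

def hornToDiag (n : ℕ) (i : Fin (n + 1)) :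
    (Λ[n, i] : SSet.{0}) ⟶ diagRestriction.obj (hornExtProd n i) where
  app m := TypeCat.ofHom fun α => ⟨(stdSimplex.objEquiv α.1, stdSimplex.objEquiv α.1), by
    obtain ⟨l, hl⟩ := (Set.ne_univ_iff_exists_notMem _).mp α.2
    simp only [Set.mem_union, Set.mem_singleton_iff, Set.mem_range, not_or, not_exists] at hl
    exact ⟨l, hl.2, hl.1, hl.1⟩⟩

namespace hornExtProd

variable {X : (SimplexCategory × SimplexCategory)ᵒᵖ ⥤ Type} {n : ℕ} {i : Fin (n + 2)}
  (ψ : (Λ[n + 1, i] : SSet.{0}) ⟶ diagRestriction.obj X)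

lemma eq_map_hornToDiag_face {p : (SimplexCategory × SimplexCategory)ᵒᵖ}
    (q : (hornExtProd (n + 1) i).obj p) {l : Fin (n + 2)} (hl : l ≠ i)
    (ha : ∀ t, q.1.1.toOrderHom t ≠ l) (hb : ∀ t, q.1.2.toOrderHom t ≠ l) :
    q = (hornExtProd (n + 1) i).map
      (Quiver.Hom.op ((factor_δ q.1.1 l, factor_δ q.1.2 l) : (p.unop.1, p.unop.2) ⟶ (⦋n⦌, ⦋n⦌)))
      ((hornToDiag (n + 1) i).app _ (horn.face i l hl)) :=
  Subtype.ext (Prod.ext (factor_δ_spec _ l ha).symm (factor_δ_spec _ l hb).symm)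

noncomputable def descFace {x y : SimplexCategory} (a : x ⟶ ⦋n + 1⦌) (b : y ⟶ ⦋n + 1⦌)
    (l : Fin (n + 2)) (hl : l ≠ i) : X.obj (op (x, y)) :=
  X.map (Quiver.Hom.op ((factor_δ a l, factor_δ b l) : (x, y) ⟶ (⦋n⦌, ⦋n⦌)))
    (ψ.app _ (horn.face i l hl))

lemma descFace_comp {x y x' y' : SimplexCategory} (f : (x', y') ⟶ (x, y)) (a : x ⟶ ⦋n + 1⦌)
    (b : y ⟶ ⦋n + 1⦌) (l : Fin (n + 2)) (hl : l ≠ i) :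
    descFace ψ (f.1 ≫ a) (f.2 ≫ b) l hl = X.map f.op (descFace ψ a b l hl) := by
  rw [descFace, descFace, factor_δ_comp, factor_δ_comp, ← X.map_comp_apply]
  rfl

lemma descFace_comp_δ {x y : SimplexCategory} (u : x ⟶ ⦋n⦌) (v : y ⟶ ⦋n⦌) (l : Fin (n + 2))
    (hl : l ≠ i) : descFace ψ (u ≫ δ l) (v ≫ δ l) l hl =
      X.map (Quiver.Hom.op ((u, v) : (x, y) ⟶ (⦋n⦌, ⦋n⦌))) (ψ.app _ (horn.face i l hl)) := by
  rw [descFace, factor_δ_comp_δ, factor_δ_comp_δ]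

lemma descFace_eq_descFace {x y : SimplexCategory} (a : x ⟶ ⦋n + 1⦌) (b : y ⟶ ⦋n + 1⦌)
    {l l' : Fin (n + 2)} (hl : l ≠ i) (hl' : l' ≠ i)
    (hal : ∀ t, a.toOrderHom t ≠ l) (hbl : ∀ t, b.toOrderHom t ≠ l)
    (hal' : ∀ t, a.toOrderHom t ≠ l') (hbl' : ∀ t, b.toOrderHom t ≠ l') :
    descFace ψ a b l hl = descFace ψ a b l' hl' := by
  obtain rfl | hll' := eq_or_ne l l'
  · rfl
  obtain _ | n := n
  · omega
  obtain ⟨j, rfl⟩ := Fin.exists_succAbove_eq hll'.symm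
  obtain ⟨w, rfl⟩ := exists_eq_comp_δ_comp_δ a l j hal hal'
  obtain ⟨w', rfl⟩ := exists_eq_comp_δ_comp_δ b l j hbl hbl'
  have hδ := δ_comp_δ_predAbove l j
  conv_rhs => rw [hδ]
  simp only [← Category.assoc, descFace_comp_δ]
  rw [diagRestriction_naturality_apply, diagRestriction_naturality_apply,
    horn.map_face_eq_map_face hl hl' _ _ hδ]

noncomputable def desc : hornExtProd (n + 1) i ⟶ X where
  app p := TypeCat.ofHom fun q => descFace ψ q.1.1 q.1.2 q.2.choose q.2.choose_spec.1
  naturality p p' f := by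
    ext q
    obtain ⟨hl, ha, hb⟩ := q.2.choose_spec
    obtain ⟨hl', ha', hb'⟩ := ((hornExtProd (n + 1) i).map f q).2.choose_spec
    exact (descFace_eq_descFace ψ _ _ hl' hl ha' hb' (fun _ => ha _) (fun _ => hb _)).trans
      (descFace_comp ψ f.unop _ _ _ hl)

lemma hornToDiag_comp_desc : hornToDiag (n + 1) i ≫ diagRestriction.map (desc ψ) = ψ := by
  ext m α
  obtain ⟨hl, ha, -⟩ := ((hornToDiag (n + 1) i).app m α).2.choose_spec
  exact (NatTrans.naturality_apply ψ (factor_δ _ _).op _).symm.trans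
    (congrArg _ (Subtype.ext (stdSimplex.objEquiv.injective (factor_δ_spec _ _ ha))))

end hornExtProd

lemma hornToDiag_hom_ext {X : (SimplexCategory × SimplexCategory)ᵒᵖ ⥤ Type} {n : ℕ}
    {i : Fin (n + 1)} {G G' : hornExtProd n i ⟶ X}
    (h : hornToDiag n i ≫ diagRestriction.map G = hornToDiag n i ≫ diagRestriction.map G') :
    G = G' := by
  ext p q
  show G.app p q = G'.app p q
  obtain ⟨l, hl, ha, hb⟩ := q.2
  cases n with
  | zero => omega
  | succ n =>
    rw [hornExtProd.eq_map_hornToDiag_face q hl ha hb, NatTrans.naturality_apply,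
      NatTrans.naturality_apply]
    exact congrArg _ (ConcreteCategory.congr_hom (congr_app h _) _)

lemma exists_hornToDiag_comp_map_eq {X : (SimplexCategory × SimplexCategory)ᵒᵖ ⥤ Type} {n : ℕ}
    {i : Fin (n + 1)} (ψ : (Λ[n, i] : SSet.{0}) ⟶ diagRestriction.obj X) :
    ∃ G : hornExtProd n i ⟶ X, hornToDiag n i ≫ diagRestriction.map G = ψ := by
  cases n with
  | zero =>
    have : ∀ p, IsEmpty ((hornExtProd 0 i).obj p) := fun p =>
      ⟨fun q => by obtain ⟨l, hl, -⟩ := q.2; omega⟩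
    refine ⟨{ app p := TypeCat.ofHom isEmptyElim
              naturality p p' f := by ext q; exact isEmptyElim q }, ?_⟩
    ext m α
    exact isEmptyElim (α := (hornExtProd 0 i).obj _) ((hornToDiag 0 i).app m α)
  | succ n => exact ⟨hornExtProd.desc ψ, hornExtProd.hornToDiag_comp_desc ψ⟩

noncomputable def hornToDiagIsUniversal (n : ℕ) (i : Fin (n + 1)) :
    (StructuredArrow.mk (hornToDiag n i)).IsUniversal :=
  .ofExistsOfHomExt (fun g => exists_hornToDiag_comp_map_eq g.hom) (fun _ _ => hornToDiag_hom_ext)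

/-- For `0 ≤ i ≤ n`, the left adjoint `diag_!` to restriction along the diagonal
`Δ ⥤ Δ × Δ` carries the horn `Λ[n, i]` to the sub-bisimplicial set of `Δⁿ ⊠ Δⁿ` consisting
of pairs `(α, β)` such that some `l ≠ i` avoids the images of both `α` and `β`. -/
theorem diagLan_horn_iso (n : ℕ) (i : Fin (n + 1))
    (L : SSet.{0} ⥤ ((SimplexCategory × SimplexCategory)ᵒᵖ ⥤ Type))
    (adj : L ⊣ ((Functor.whiskeringLeft _ _ _).obj (Functor.diag SimplexCategory).op :
      ((SimplexCategory × SimplexCategory)ᵒᵖ ⥤ Type) ⥤ SSet.{0})) :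
    Nonempty (L.obj Λ[n, i] ≅ hornExtProd n i) :=
  ⟨(StructuredArrow.proj _ _).mapIso
    ((mkInitialOfLeftAdjoint _ adj _).uniqueUpToIso (hornToDiagIsUniversal n i))⟩
end

section
/- Let n ≥ 1 and let S be a nonempty proper subset of {0, 1, …, n}. Let K ⊆ Δⁿ be the simplicial subset whose m-simplices are the maps α : [m] → [n] whose image does not contain S (equivalently, K is the union over s ∈ S of the faces of Δⁿ opposite the vertices s). Then K is weakly contractible; equivalently, the inclusion K ↪ Δⁿ is a weak homotopy equivalence of simplicial sets (in fact an anodyne extension). Note that for S = [n] \ {i} this recovers the horn Λⁿᵢ. -/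
open CategoryTheory Simplicial

/-- For a set `S` of vertices of `Δⁿ`, the simplicial subset of `Δⁿ` whose `m`-simplices are
the maps `α : [m] ⟶ [n]` whose image does not contain `S`; equivalently, the union over
`s ∈ S` of the faces of `Δⁿ` opposite the vertices `s`.  (For `S = [n] \ {i}` this is the
horn `Λⁿᵢ`.) -/
def faceUnion (n : ℕ) (S : Set (Fin (n + 1))) : SSet.{0} where
  obj m := { α : m.unop ⟶ ⦋n⦌ // ¬ S ⊆ Set.range α.toOrderHom }
  map {m m'} f := TypeCat.ofHom fun α => ⟨f.unop ≫ α.1, fun h => α.2 (fun s hs => by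
    obtain ⟨a, ha⟩ := h hs
    exact ⟨f.unop.toOrderHom a, ha⟩)⟩
  map_id := by
    intro m
    ext α
    simp
  map_comp := by
    intro m m' m'' f g
    ext α
    simp

/-- The inclusion of `faceUnion n S` into the standard simplex `Δⁿ`. -/
def faceUnionInclusion (n : ℕ) (S : Set (Fin (n + 1))) : faceUnion n S ⟶ Δ[n] where
  app m := TypeCat.ofHom fun α => SSet.stdSimplex.objEquiv.symm α.1

/-!
Induction on the number of vertices outside `S`. If `S = {i}ᶜ`, the face union is the horn
`Λ[n, i]`. Otherwise pick `t ∉ S` with `t ≠ i`. The simplices of `faceUnion n (insert t S)` that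
are not in `faceUnion n S` all miss the vertex `t`, so the former is obtained from the latter by
attaching the face opposite `t`, a copy of `Δ[n - 1]`, along its face union for
`S' = t.succAbove ⁻¹' S`. Both `S'` and `insert t S` miss fewer vertices than `S`, and lifting
properties are stable under pushouts and composition.
-/

open SSet SimplexCategory Limits

section

variable {n : ℕ} {α : Type*} {t : Fin (n + 1)} {S : Set (Fin (n + 1))} {f : α → Fin n}

lemma Fin.preimage_succAbove_subset_range (h : S ⊆ Set.range (t.succAbove ∘ f)) :
    t.succAbove ⁻¹' S ⊆ Set.range f := by
  rw [Set.range_comp] at h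
  exact (Set.preimage_mono h).trans
    (Set.preimage_image_eq _ Fin.succAbove_right_injective).subset

lemma Fin.subset_range_succAbove_comp (ht : t ∉ S) (h : t.succAbove ⁻¹' S ⊆ Set.range f) :
    S ⊆ Set.range (t.succAbove ∘ f) := by
  have hS : S ⊆ Set.range t.succAbove := by
    rw [Fin.range_succAbove]
    exact fun s hs hst ↦ ht (hst ▸ hs)
  rw [Set.range_comp]
  exact (Set.image_preimage_eq_of_subset hS).symm.subset.trans (Set.image_mono h)

end

lemma Fin.ncard_compl_preimage_succAbove {n : ℕ} (S : Set (Fin (n + 1))) (t : Fin (n + 1)) :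
    (t.succAbove ⁻¹' S)ᶜ.ncard = (insert t S)ᶜ.ncard := by
  have h : (t.succAbove ⁻¹' S)ᶜ = t.succAbove ⁻¹' (insert t S)ᶜ := by
    ext j
    simp [Fin.succAbove_ne]
  rw [h, Set.ncard_preimage_of_injective_subset_range Fin.succAbove_right_injective]
  rw [Fin.range_succAbove]
  exact Set.compl_subset_compl.2 (Set.singleton_subset_iff.2 (Set.mem_insert t S))

lemma SimplexCategory.exists_comp_δ_eq {x : SimplexCategory} {n : ℕ} (α : x ⟶ ⦋n + 1⦌)
    {t : Fin (n + 2)} (ht : t ∉ Set.range α.toOrderHom) : ∃ β : x ⟶ ⦋n⦌, β ≫ δ t = α :=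
  ⟨factor_δ α t, factor_δ_spec α t fun k hk ↦ ht ⟨k, hk⟩⟩

def faceUnionMap (n : ℕ) {S T : Set (Fin (n + 1))} (h : S ⊆ T) :
    faceUnion n S ⟶ faceUnion n T where
  app _ := TypeCat.ofHom fun α ↦ ⟨α.1, fun hT ↦ α.2 (h.trans hT)⟩

lemma faceUnionMap_comp_faceUnionInclusion (n : ℕ) {S T : Set (Fin (n + 1))} (h : S ⊆ T) :
    faceUnionMap n h ≫ faceUnionInclusion n T = faceUnionInclusion n S := rfl

def faceUnionδ {m : ℕ} (S : Set (Fin (m + 2))) (t : Fin (m + 2)) :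
    faceUnion m (t.succAbove ⁻¹' S) ⟶ faceUnion (m + 1) S where
  app _ := TypeCat.ofHom fun β ↦
    ⟨β.1 ≫ δ t, fun hS ↦ β.2 (Fin.preimage_succAbove_subset_range hS)⟩

def stdSimplexδToFaceUnion {m : ℕ} {S : Set (Fin (m + 2))} {t : Fin (m + 2)} (ht : t ∈ S) :
    Δ[m] ⟶ faceUnion (m + 1) S where
  app _ := TypeCat.ofHom fun β ↦ ⟨stdSimplex.objEquiv β ≫ δ t, fun hS ↦
    (hS ht).elim fun _ h ↦ Fin.succAbove_ne t _ h⟩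

lemma stdSimplexδToFaceUnion_comp_faceUnionInclusion {m : ℕ} {S : Set (Fin (m + 2))}
    {t : Fin (m + 2)} (ht : t ∈ S) :
    stdSimplexδToFaceUnion ht ≫ faceUnionInclusion (m + 1) S = stdSimplex.δ t := rfl

instance {m : ℕ} {S : Set (Fin (m + 2))} {t : Fin (m + 2)} (ht : t ∈ S) :
    Mono (stdSimplexδToFaceUnion ht) :=
  mono_of_mono_fac (stdSimplexδToFaceUnion_comp_faceUnionInclusion ht)

lemma isPushout_faceUnionδ {m : ℕ} {S : Set (Fin (m + 2))} {t : Fin (m + 2)} (ht : t ∉ S) :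
    IsPushout (faceUnionInclusion m (t.succAbove ⁻¹' S)) (faceUnionδ S t)
      (stdSimplexδToFaceUnion (Set.mem_insert t S))
      (faceUnionMap (m + 1) (Set.subset_insert t S)) where
  w := rfl
  isColimit' := ⟨evaluationJointlyReflectsColimits _ fun k ↦ by
    refine (isColimitMapCoconePushoutCoconeEquiv _ _).2 (IsPushout.isColimit ?_)
    refine Types.isPushout_of_isPullback_of_mono' ?_ ?_ ?_
    · rw [Types.isPullback_iff]
      refine ⟨rfl, fun x y h ↦ Subtype.ext (stdSimplex.objEquiv.symm.injective h.1),
        fun x₂ x₃ h ↦ ?_⟩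
      have hx₃ : stdSimplex.objEquiv x₂ ≫ δ t = x₃.1 := congrArg Subtype.val h
      refine ⟨⟨stdSimplex.objEquiv x₂, fun hS ↦ x₃.2 ?_⟩, Equiv.symm_apply_apply _ _,
        Subtype.ext hx₃⟩
      rw [← hx₃]
      exact Fin.subset_range_succAbove_comp ht hS
    · refine Set.eq_univ_of_forall fun α ↦ ?_
      by_cases hS : S ⊆ Set.range α.1.toOrderHom
      · obtain ⟨β, hβ⟩ := exists_comp_δ_eq α.1 fun htα ↦ α.2 (Set.insert_subset htα hS)
        exact Or.inl ⟨stdSimplex.objEquiv.symm β, Subtype.ext hβ⟩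
      · exact Or.inr ⟨⟨α.1, hS⟩, rfl⟩
    · intro x y _ _ h
      exact Subtype.ext (congrArg Subtype.val h :)⟩

lemma hasLiftingProperty_faceUnionInclusion_of_insert {m : ℕ} {S : Set (Fin (m + 2))}
    {t : Fin (m + 2)} (ht : t ∉ S) {E B : SSet.{0}} (p : E ⟶ B)
    [HasLiftingProperty (faceUnionInclusion m (t.succAbove ⁻¹' S)) p]
    [HasLiftingProperty (faceUnionInclusion (m + 1) (insert t S)) p] :
    HasLiftingProperty (faceUnionInclusion (m + 1) S) p := by
  have := (isPushout_faceUnionδ ht).flip.hasLiftingProperty p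
  rw [← faceUnionMap_comp_faceUnionInclusion (m + 1) (Set.subset_insert t S)]
  infer_instance

def faceUnionComplSingletonIsoHorn (n : ℕ) (i : Fin (n + 1)) :
    faceUnion n {i}ᶜ ≅ (Λ[n, i] : SSet.{0}) where
  hom.app _ := TypeCat.ofHom fun α ↦ ⟨stdSimplex.objEquiv.symm α.1, fun h ↦
    α.2 (Set.compl_subset_iff_union.2 ((Set.union_comm _ _).trans h))⟩
  inv.app _ := TypeCat.ofHom fun α ↦ ⟨stdSimplex.objEquiv α.1, fun h ↦
    α.2 ((Set.union_comm _ _).trans (Set.compl_subset_iff_union.1 h))⟩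

lemma faceUnionComplSingletonIsoHorn_hom_comp_ι (n : ℕ) (i : Fin (n + 1)) :
    (faceUnionComplSingletonIsoHorn n i).hom ≫ Λ[n, i].ι = faceUnionInclusion n {i}ᶜ := rfl

theorem faceUnion_inclusion_anodyne_general (n : ℕ) (S : Set (Fin (n + 1)))
    (hS : S.Nonempty) (hS' : S ≠ Set.univ) {E B : SSet.{0}} (p : E ⟶ B)
    (hp : ∀ (m : ℕ), 1 ≤ m → ∀ j : Fin (m + 1),
      HasLiftingProperty (SSet.horn m j).ι p) :
    HasLiftingProperty (faceUnionInclusion n S) p := by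
  induction hk : Sᶜ.ncard using Nat.strong_induction_on generalizing n S with
  | _ k ih =>
    obtain ⟨s, hs⟩ := hS
    obtain ⟨i, hi⟩ := Set.nonempty_compl.2 hS'
    have hn : 2 ≤ n + 1 :=
      Fin.nontrivial_iff_two_le.1 (nontrivial_of_ne s i (ne_of_mem_of_not_mem hs hi))
    obtain ⟨m, rfl⟩ : ∃ m, n = m + 1 := Nat.exists_eq_add_one.2 (by omega)
    by_cases hSi : S = {i}ᶜ
    · subst hSi
      have := hp (m + 1) m.succ_pos i
      rw [← faceUnionComplSingletonIsoHorn_hom_comp_ι]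
      infer_instance
    obtain ⟨t, hti, ht⟩ : ∃ t, t ≠ i ∧ t ∉ S := by
      by_contra! h
      exact hSi (Set.Subset.antisymm (fun x hx hxi ↦ hi (hxi ▸ hx)) fun x hx ↦ h x hx)
    obtain ⟨s', rfl⟩ := Fin.exists_succAbove_eq (ne_of_mem_of_not_mem hs ht)
    obtain ⟨i', rfl⟩ := Fin.exists_succAbove_eq hti.symm
    have hlt : (insert t S)ᶜ.ncard < k :=
      hk ▸ Set.ncard_lt_ncard (compl_lt_compl_iff_lt.2 (Set.ssubset_insert ht)) (Set.toFinite _)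
    have := ih _ hlt (m + 1) (insert t S) ⟨t, Set.mem_insert t S⟩
      (Set.ne_univ_iff_exists_notMem _ |>.2
        ⟨_, fun h ↦ (Set.mem_insert_iff.1 h).elim (Fin.succAbove_ne t i') hi⟩) rfl
    have := ih _ (Fin.ncard_compl_preimage_succAbove S t ▸ hlt) m (t.succAbove ⁻¹' S)
      ⟨s', hs⟩ (Set.ne_univ_iff_exists_notMem _ |>.2 ⟨i', hi⟩) rfl
    exact hasLiftingProperty_faceUnionInclusion_of_insert ht p

/-- For `n ≥ 1` and `S` a nonempty proper subset of the vertices of `Δⁿ`, the union of the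
faces opposite the vertices of `S` is weakly contractible; in fact its inclusion into `Δⁿ` is
an anodyne extension: it has the left lifting property with respect to every morphism having
the right lifting property with respect to all horn inclusions. -/
theorem faceUnion_inclusion_anodyne (n : ℕ) (hn : 1 ≤ n) (S : Set (Fin (n + 1)))
    (hS : S.Nonempty) (hS' : S ≠ Set.univ) {E B : SSet.{0}} (p : E ⟶ B)
    (hp : ∀ (m : ℕ), 1 ≤ m → ∀ j : Fin (m + 1),
      HasLiftingProperty (SSet.horn m j).ι p) :
    HasLiftingProperty (faceUnionInclusion n S) p :=
  faceUnion_inclusion_anodyne_general n S hS hS' p hp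
end
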